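/- Let (X,d) be a metric space, (A_n) closed subsets with d_H(A_n, A_∞) → 0 for a closed set A_∞, and μ a Borel measure with μ(⋃_n A_n) < ∞. If there exists m > 0 such that μ(A_n) ≥ m for infinitely many n, then μ(A_∞) ≥ m. -/

import Mathlib

open Metric Set Filter Topology MeasureTheory ENNReal

theorem eventually_subset_cthickening_of_tendsto_hausdorffEDist {α ι : Type*}
    [PseudoEMetricSpace α] {l : Filter ι} {A : ι → Set α} {s : Set α}
    (hA : Tendsto (fun i => hausdorffEDist (A i) s) l (𝓝 0)) {δ : ℝ} (hδ : 0 < δ) :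
    ∀ᶠ i in l, A i ⊆ cthickening δ s := by
  filter_upwards [hA.eventually (ge_mem_nhds (ENNReal.ofReal_pos.mpr hδ))] with i hi x hx
  exact mem_cthickening_iff.mpr ((infEDist_le_hausdorffEDist_of_mem hx).trans hi)

theorem le_measure_of_frequently_le_of_tendsto_hausdorffEDist {α ι : Type*}
    [PseudoMetricSpace α] [MeasurableSpace α] [OpensMeasurableSpace α] {μ : Measure α}
    {l : Filter ι} {A : ι → Set α} {s : Set α} (hs : IsClosed s)
    (hμs : ∃ R > 0, μ (cthickening R s) ≠ ∞)
    (hA : Tendsto (fun i => hausdorffEDist (A i) s) l (𝓝 0)) {m : ℝ≥0∞}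
    (hm : ∃ᶠ i in l, m ≤ μ (A i)) :
    m ≤ μ s := by
  have hthick : ∀ δ ∈ Ioi (0 : ℝ), m ≤ μ (cthickening δ s) := fun δ hδ =>
    let ⟨_, hmi, hsub⟩ :=
      (hm.and_eventually (eventually_subset_cthickening_of_tendsto_hausdorffEDist hA hδ)).exists
    hmi.trans (measure_mono hsub)
  exact ge_of_tendsto ((tendsto_measure_cthickening_of_isClosed hμs hs).mono_left
    nhdsWithin_le_nhds) (eventually_nhdsWithin_of_forall hthick)

theorem measure_limit_ge_of_frequently_general {X : Type*} [MetricSpace X]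
    [MeasurableSpace X] [BorelSpace X]
    (A : ℕ → Set X) (Alim : Set X)
    (hAlimcl : IsClosed Alim)
    (hconv : Tendsto (fun n => EMetric.hausdorffEdist (A n) Alim) atTop (𝓝 0))
    (μ : Measure X) (hfin : μ (⋃ n, A n) < ⊤)
    (m : ℝ≥0∞)
    (hfreq : ∃ᶠ n in atTop, m ≤ μ (A n)) :
    m ≤ μ Alim := by
  -- Restricting to `⋃ n, A n` leaves every `μ (A n)` unchanged and makes all thickenings finite.
  have : IsFiniteMeasure (μ.restrict (⋃ n, A n)) := isFiniteMeasure_restrict.mpr hfin.ne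
  have hfreq' : ∃ᶠ n in atTop, m ≤ μ.restrict (⋃ n, A n) (A n) :=
    hfreq.mono fun n hn => hn.trans_eq (Measure.restrict_eq_self _ (subset_iUnion A n)).symm
  calc m ≤ μ.restrict (⋃ n, A n) Alim :=
        le_measure_of_frequently_le_of_tendsto_hausdorffEDist hAlimcl
          ⟨1, one_pos, measure_ne_top _ _⟩ hconv hfreq'
    _ ≤ μ Alim := Measure.restrict_apply_le _ _

theorem measure_limit_ge_of_frequently {X : Type*} [MetricSpace X]
    [MeasurableSpace X] [BorelSpace X]
    (A : ℕ → Set X) (Alim : Set X)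
    (hAcl : ∀ n, IsClosed (A n)) (hAlimcl : IsClosed Alim)
    (hconv : Tendsto (fun n => EMetric.hausdorffEdist (A n) Alim) atTop (𝓝 0))
    (μ : Measure X) (hfin : μ (⋃ n, A n) < ⊤)
    (m : ℝ≥0∞) (hm : 0 < m)
    (hfreq : ∃ᶠ n in atTop, m ≤ μ (A n)) :
    m ≤ μ Alim :=
  measure_limit_ge_of_frequently_general A Alim hAlimcl hconv μ hfin m hfreq
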